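/- The set A = {0,1,2,4,5,6} does not tile the integers, although its polynomial A(x) = Φ_3(x)·Φ_8(x) satisfies (T1): A(1) = ∏_{s∈S_A} Φ_s(1). -/

import Mathlib

/-!
Since cyclotomic polynomials are irreducible and pairwise distinct, the only `Φ_s` dividing
`A(x) = Φ₃ Φ₈` are `Φ₃` and `Φ₈`, so `S_A = {3, 8}` and (T1) reads `|A| = A(1) = Φ₃(1) Φ₈(1)`.
Tiling fails because `3 ∉ A` while `3 - A ⊆ A - A = [-6, 6]`.
-/

open Polynomial

/-- The polynomial `∑_{a ∈ A} x^a` of a finite set of nonnegative integers. -/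
noncomputable def setPoly (A : Finset ℕ) : Polynomial ℤ :=
  ∑ a ∈ A, X ^ a

/-- A finite set of nonnegative integers tiles the integers. -/
def Tiles (A : Finset ℕ) : Prop :=
  ∃ C : Set ℤ, ∀ z : ℤ, ∃! p : ℕ × ℤ, p.1 ∈ A ∧ p.2 ∈ C ∧ (p.1 : ℤ) + p.2 = z

lemma setPoly_eval_one (A : Finset ℕ) : (setPoly A).eval 1 = A.card := by
  simp [setPoly, eval_finsetSum]

lemma cyclotomic_dvd_cyclotomic_iff {s m : ℕ} (hs : 0 < s) (hm : 0 < m) :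
    cyclotomic s ℤ ∣ cyclotomic m ℤ ↔ s = m := by
  refine ⟨fun h => cyclotomic_injective (R := ℤ) ?_, fun h => h ▸ dvd_rfl⟩
  exact eq_of_monic_of_associated (cyclotomic.monic s ℤ) (cyclotomic.monic m ℤ)
    ((cyclotomic.irreducible hs).associated_of_dvd (cyclotomic.irreducible hm) h)

lemma cyclotomic_dvd_prod_cyclotomic_iff {s : ℕ} {M : Finset ℕ} (hs : 0 < s)
    (hM : ∀ m ∈ M, 0 < m) : cyclotomic s ℤ ∣ ∏ m ∈ M, cyclotomic m ℤ ↔ s ∈ M := by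
  rw [(cyclotomic.irreducible hs).prime.dvd_finsetProd_iff]
  exact ⟨fun ⟨m, hm, h⟩ => (cyclotomic_dvd_cyclotomic_iff hs (hM m hm)).1 h ▸ hm,
    fun h => ⟨s, h, dvd_rfl⟩⟩

/-- For `c ∈ C`, the point `t + c` lies outside `A + c`, and any other translate `A + c'`
covering it meets `A + c`, because `c' - c ∈ t - A ⊆ A - A`. -/
lemma not_tiles_of_forall_sub_mem_sub {A : Finset ℕ} {t : ℤ} (ht : ∀ a ∈ A, (a : ℤ) ≠ t)
    (hsub : ∀ a ∈ A, ∃ a₁ ∈ A, ∃ a₂ ∈ A, t - a = (a₁ : ℤ) - a₂) : ¬ Tiles A := by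
  rintro ⟨C, hC⟩
  have translate_eq {a₁ a₂ : ℕ} {c₁ c₂ : ℤ} (ha₁ : a₁ ∈ A) (ha₂ : a₂ ∈ A) (hc₁ : c₁ ∈ C)
      (hc₂ : c₂ ∈ C) (h : (a₁ : ℤ) + c₁ = a₂ + c₂) : c₁ = c₂ :=
    congrArg Prod.snd ((hC _).unique (y₁ := (a₁, c₁)) (y₂ := (a₂, c₂)) ⟨ha₁, hc₁, h⟩ ⟨ha₂, hc₂, rfl⟩)
  obtain ⟨⟨_, c₀⟩, ⟨_, hc₀, -⟩, -⟩ := hC 0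
  obtain ⟨⟨a, c⟩, ⟨ha, hc, hac⟩, -⟩ := hC (t + c₀)
  simp only at hac
  obtain ⟨a₁, ha₁, a₂, ha₂, hdiff⟩ := hsub a ha
  have hcc₀ : c = c₀ := translate_eq ha₂ ha₁ hc hc₀ (by linarith)
  exact ht a ha (by linarith)

lemma setPoly_eq_cyclotomic_three_mul_cyclotomic_eight :
    setPoly ({0, 1, 2, 4, 5, 6} : Finset ℕ) = cyclotomic 3 ℤ * cyclotomic 8 ℤ := by
  rw [cyclotomic_prime ℤ 3, show 8 = 2 ^ (2 + 1) from rfl,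
    cyclotomic_prime_pow_eq_geom_sum Nat.prime_two]
  simp only [setPoly, Finset.mem_insert, zero_ne_one, OfNat.zero_ne_ofNat, Finset.mem_singleton,
    or_self, not_false_eq_true, Finset.sum_insert, pow_zero, OfNat.one_ne_ofNat, pow_one,
    Nat.reduceEqDiff, Finset.sum_singleton, Finset.sum_range_succ, Finset.range_one, Nat.reducePow]
  ring

theorem example_not_tiling_but_T1
    (S : Finset ℕ)
    (hS : ∀ s : ℕ, s ∈ S ↔
      (IsPrimePow s ∧ cyclotomic s ℤ ∣ setPoly ({0, 1, 2, 4, 5, 6} : Finset ℕ))) :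
    ¬ Tiles ({0, 1, 2, 4, 5, 6} : Finset ℕ) ∧
    setPoly ({0, 1, 2, 4, 5, 6} : Finset ℕ) = cyclotomic 3 ℤ * cyclotomic 8 ℤ ∧
    ((({0, 1, 2, 4, 5, 6} : Finset ℕ).card : ℤ) =
      ∏ s ∈ S, (cyclotomic s ℤ).eval 1) := by
  have hA : setPoly ({0, 1, 2, 4, 5, 6} : Finset ℕ) = ∏ m ∈ {3, 8}, cyclotomic m ℤ := by
    rw [Finset.prod_pair (by decide), setPoly_eq_cyclotomic_three_mul_cyclotomic_eight]
  have hS₃₈ : S = {3, 8} := by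
    ext s
    rw [hS, hA]
    constructor
    · rintro ⟨hs, hdvd⟩
      exact (cyclotomic_dvd_prod_cyclotomic_iff hs.pos (by decide)).1 hdvd
    · intro hs
      refine ⟨?_, Finset.dvd_prod_of_mem _ hs⟩
      rcases Finset.mem_insert.1 hs with rfl | hs
      · exact Nat.prime_three.isPrimePow
      · rw [Finset.mem_singleton.1 hs]
        exact show IsPrimePow (2 ^ 3) from Nat.prime_two.isPrimePow.pow three_ne_zero
  refine ⟨not_tiles_of_forall_sub_mem_sub (t := 3) (by decide) (by decide),
    setPoly_eq_cyclotomic_three_mul_cyclotomic_eight, ?_⟩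
  rw [← setPoly_eval_one, hA, eval_prod, hS₃₈]
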